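/- As formal power series in q over Q: 1 + q^2*(1/(1-q) - q) + (q^6/(1-q^2)) * (q+q^2+q^4)/(1-q^5) + \sum_{m=3}^{\infty} q^{m(m+1)}/((1-q)(1-q^2)(1-q^5)(1-q^4)(1-q^6)(1-q^7)\cdots(1-q^m)) = (1/( (1-q^2)(1-q^5) )) * \prod_{k=1}^{\infty} 1/((1-q^{5k+2})(1-q^{5k+3})), assuming the second Rogers-Ramanujan identity; equivalently, the specialization t = 1, w = q^2 of the (t,w)-refinement for parts 2 and 3. -/

import Mathlib

/-!
Multiplying by `1 - q⁵` turns the `m`-th summand, `m ≥ 3`, into `1 - q³` times the `m`-th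
summand `q^{m(m+1)}/((1-q)⋯(1-q^m))` of the Rogers–Ramanujan sum, and the first three summands
into `1 - q³` times the Rogers–Ramanujan summands for `m ≤ 2`. Hence `1 - q⁵` times the left
side is `(1 - q³) ∏_{k ≥ 0} 1/((1-q^{5k+2})(1-q^{5k+3}))`, and the factor `k = 0` of that
product cancels `1 - q³` and leaves `1/(1 - q²)`. These identities hold for the truncated sums and
products, which converge coefficientwise, so they pass to the limit.
-/

noncomputable section

open PowerSeries Finset

def q : PowerSeries ℚ := PowerSeries.X

/-- The `m`-th summand `q^{m(m+1)}/((1-q)(1-q²)(1-q⁵)(1-q⁴)(1-q⁶)⋯(1-q^m))`: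
the usual factor `(1-q³)` is replaced by `(1-q⁵)`. -/
def term (m : ℕ) : PowerSeries ℚ :=
  q ^ (m * (m + 1)) * (1 - q)⁻¹ * (1 - q ^ 2)⁻¹ * (1 - q ^ 5)⁻¹ *
    ∏ j ∈ Icc 4 m, (1 - q ^ j)⁻¹

/-- The infinite sum `∑_{m≥3} term m`, defined coefficientwise. -/
def sumTail : PowerSeries ℚ :=
  PowerSeries.mk fun N => coeff N (∑ m ∈ Icc 3 N, term m)

/-- The infinite product `∏_{k≥1} 1/((1-q^{5k+2})(1-q^{5k+3}))`, defined
coefficientwise. -/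
def prodTail : PowerSeries ℚ :=
  PowerSeries.mk fun N =>
    coeff N
      (∏ k ∈ Icc 1 N, (1 - q ^ (5 * k + 2))⁻¹ * (1 - q ^ (5 * k + 3))⁻¹)

/-- The second Rogers-Ramanujan identity, as a hypothesis. -/
def RR2 : Prop :=
  1 + (PowerSeries.mk fun N =>
        coeff N
          (∑ m ∈ Icc 1 N, q ^ (m * (m + 1)) * ∏ j ∈ Icc 1 m, (1 - q ^ j)⁻¹))
    = PowerSeries.mk fun N =>
        coeff N
          (∏ k ∈ range (N + 1),
            (1 - q ^ (5 * k + 2))⁻¹ * (1 - q ^ (5 * k + 3))⁻¹)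

open Filter Topology PowerSeries.WithPiTopology

namespace PowerSeries

section Limits

variable {R : Type*} [CommRing R] [TopologicalSpace R]

theorem tendsto_mk_coeff_of_X_pow_dvd_succ_sub {f : ℕ → R⟦X⟧}
    (hf : ∀ N, X ^ (N + 1) ∣ f (N + 1) - f N) :
    Tendsto f atTop (𝓝 (mk fun N => coeff N (f N))) := by
  have coherent (n N : ℕ) (hnN : n ≤ N) : X ^ (n + 1) ∣ f N - f n := by
    induction N, hnN using Nat.le_induction with
    | base => simp
    | succ N hnN ih =>
      rw [← sub_add_sub_cancel]
      exact ((pow_dvd_pow X (by omega)).trans (hf N)).add ih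
  rw [tendsto_iff_coeff_tendsto]
  intro n
  refine tendsto_const_nhds.congr' ?_
  filter_upwards [eventually_ge_atTop n] with N hN
  have := X_pow_dvd_iff.mp (coherent n N hN) n (by omega)
  rw [map_sub, sub_eq_zero] at this
  rw [coeff_mk, this]

theorem tendsto_sum_Icc_of_X_pow_dvd {g : ℕ → R⟦X⟧} (a : ℕ) (hg : ∀ m, X ^ m ∣ g m) :
    Tendsto (fun N => ∑ m ∈ Icc a N, g m) atTop
      (𝓝 (mk fun N => coeff N (∑ m ∈ Icc a N, g m))) := by
  refine tendsto_mk_coeff_of_X_pow_dvd_succ_sub fun N => ?_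
  by_cases ha : a ≤ N + 1
  · rw [sum_Icc_succ_top ha, add_sub_cancel_left]
    exact hg (N + 1)
  · rw [Icc_eq_empty (by omega), Icc_eq_empty (by omega), sub_self]
    exact dvd_zero _

theorem tendsto_prod_Icc_of_X_pow_dvd_sub_one {F : ℕ → R⟦X⟧} (a : ℕ)
    (hF : ∀ k, X ^ k ∣ F k - 1) :
    Tendsto (fun N => ∏ k ∈ Icc a N, F k) atTop
      (𝓝 (mk fun N => coeff N (∏ k ∈ Icc a N, F k))) := by
  refine tendsto_mk_coeff_of_X_pow_dvd_succ_sub fun N => ?_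
  by_cases ha : a ≤ N + 1
  · rw [prod_Icc_succ_top ha, ← mul_sub_one]
    exact dvd_mul_of_dvd_right (hF (N + 1)) _
  · rw [Icc_eq_empty (by omega), Icc_eq_empty (by omega), sub_self]
    exact dvd_zero _

theorem tendsto_prod_range_of_X_pow_dvd_sub_one {F : ℕ → R⟦X⟧}
    (hF : ∀ k, X ^ k ∣ F k - 1) :
    Tendsto (fun N => ∏ k ∈ range (N + 1), F k) atTop
      (𝓝 (mk fun N => coeff N (∏ k ∈ range (N + 1), F k))) := by
  refine tendsto_mk_coeff_of_X_pow_dvd_succ_sub fun N => ?_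
  rw [prod_range_succ _ (N + 1), ← mul_sub_one]
  exact dvd_mul_of_dvd_right (hF (N + 1)) _

end Limits

theorem X_pow_dvd_inv_sub_one {K : Type*} [Field K] {φ : K⟦X⟧} {j : ℕ}
    (h : X ^ j ∣ φ - 1) : X ^ j ∣ φ⁻¹ - 1 := by
  rcases j.eq_zero_or_pos with rfl | hj
  · simp
  have hφ : constantCoeff φ ≠ 0 := by
    have := X_pow_dvd_iff.mp h 0 hj
    rw [coeff_zero_eq_constantCoeff, map_sub, map_one, sub_eq_zero] at this
    simp [this]
  have : φ⁻¹ - 1 = -(φ⁻¹ * (φ - 1)) := by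
    rw [mul_sub_one, PowerSeries.inv_mul_cancel φ hφ]; ring
  rw [this]
  exact (dvd_mul_of_dvd_right h _).neg_right

theorem X_pow_dvd_inv_one_sub_X_pow_sub_one {K : Type*} [Field K] {i j : ℕ} (h : i ≤ j) :
    X ^ i ∣ (1 - X ^ j : K⟦X⟧)⁻¹ - 1 :=
  X_pow_dvd_inv_sub_one
    ⟨-X ^ (j - i), by rw [sub_sub_cancel_left, mul_neg, ← pow_add, Nat.add_sub_cancel' h]⟩

end PowerSeries

def rogersRamanujanTerm (m : ℕ) : ℚ⟦X⟧ :=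
  q ^ (m * (m + 1)) * ∏ j ∈ Icc 1 m, (1 - q ^ j)⁻¹

def rogersRamanujanFactor (k : ℕ) : ℚ⟦X⟧ :=
  (1 - q ^ (5 * k + 2))⁻¹ * (1 - q ^ (5 * k + 3))⁻¹

def initialTerms : ℚ⟦X⟧ :=
  1 + q ^ 2 * ((1 - q)⁻¹ - q)
    + (q ^ 6 * (1 - q ^ 2)⁻¹) * ((q + q ^ 2 + q ^ 4) * (1 - q ^ 5)⁻¹)

theorem X_pow_dvd_term (m : ℕ) : X ^ m ∣ term m := by
  have hm : X ^ m ∣ q ^ (m * (m + 1)) := pow_dvd_pow X (Nat.le_mul_of_pos_right m (by omega))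
  unfold term
  apply_rules [dvd_mul_of_dvd_left]

theorem X_pow_dvd_rogersRamanujanTerm (m : ℕ) : X ^ m ∣ rogersRamanujanTerm m :=
  (pow_dvd_pow X (Nat.le_mul_of_pos_right m (by omega))).trans (dvd_mul_right _ _)

theorem X_pow_dvd_rogersRamanujanFactor_sub_one (k : ℕ) :
    X ^ k ∣ rogersRamanujanFactor k - 1 := by
  have h2 := X_pow_dvd_inv_one_sub_X_pow_sub_one (K := ℚ) (show k ≤ 5 * k + 2 by omega)
  have h3 := X_pow_dvd_inv_one_sub_X_pow_sub_one (K := ℚ) (show k ≤ 5 * k + 3 by omega)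
  have : rogersRamanujanFactor k - 1 = (1 - q ^ (5 * k + 2))⁻¹ * ((1 - q ^ (5 * k + 3))⁻¹ - 1)
      + ((1 - q ^ (5 * k + 2))⁻¹ - 1) := by
    rw [rogersRamanujanFactor]; ring
  rw [this]
  exact (dvd_mul_of_dvd_right h3 _).add h2

theorem one_sub_q_pow_mul_inv {j : ℕ} (hj : j ≠ 0) : (1 - q ^ j) * (1 - q ^ j)⁻¹ = 1 :=
  PowerSeries.mul_inv_cancel _ (by simp [q, hj])

theorem prod_Icc_one_eq_mul_prod_Icc_four {M : Type*} [CommMonoid M] (f : ℕ → M) {m : ℕ}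
    (hm : 3 ≤ m) : ∏ j ∈ Icc 1 m, f j = f 1 * f 2 * f 3 * ∏ j ∈ Icc 4 m, f j := by
  induction m, hm using Nat.le_induction with
  | base => simp [prod_Icc_succ_top]
  | succ m hm ih =>
    rw [prod_Icc_succ_top (by omega), prod_Icc_succ_top (by omega), ih, mul_assoc]

theorem one_sub_q_pow_five_mul_term {m : ℕ} (hm : 3 ≤ m) :
    (1 - q ^ 5) * term m = (1 - q ^ 3) * rogersRamanujanTerm m := by
  rw [term, rogersRamanujanTerm, prod_Icc_one_eq_mul_prod_Icc_four _ hm, pow_one]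
  linear_combination (q ^ (m * (m + 1)) * (1 - q)⁻¹ * (1 - q ^ 2)⁻¹ *
    ∏ j ∈ Icc 4 m, (1 - q ^ j)⁻¹) * (one_sub_q_pow_mul_inv (j := 5) (by omega)
      - one_sub_q_pow_mul_inv (j := 3) (by omega))

theorem one_sub_q_pow_five_mul_initialTerms :
    (1 - q ^ 5) * initialTerms
      = (1 - q ^ 3) * (1 + rogersRamanujanTerm 1 + rogersRamanujanTerm 2) := by
  have h1 : (1 - q) * (1 - q)⁻¹ = 1 := by simpa using one_sub_q_pow_mul_inv (j := 1) one_ne_zero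
  have h2 := one_sub_q_pow_mul_inv (j := 2) (by omega)
  have h5 := one_sub_q_pow_mul_inv (j := 5) (by omega)
  rw [initialTerms, rogersRamanujanTerm, rogersRamanujanTerm, Icc_self, prod_singleton,
    show Icc 1 2 = {1, 2} from rfl, prod_pair (by norm_num), pow_one]
  linear_combination (q ^ 5 * (1 + q) - q ^ 6 * (1 + q + q ^ 2) * (1 - q ^ 2)⁻¹) * h1
    - q ^ 6 * (1 + q ^ 2) * h2 + q ^ 6 * (q + q ^ 2 + q ^ 4) * (1 - q ^ 2)⁻¹ * h5

theorem one_sub_q_pow_five_mul_initialTerms_add_sum_term {N : ℕ} (hN : 2 ≤ N) :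
    (1 - q ^ 5) * (initialTerms + ∑ m ∈ Icc 3 N, term m)
      = (1 - q ^ 3) * (1 + ∑ m ∈ Icc 1 N, rogersRamanujanTerm m) := by
  induction N, hN using Nat.le_induction with
  | base =>
    rw [Icc_eq_empty (by omega), sum_empty, add_zero, one_sub_q_pow_five_mul_initialTerms,
      show Icc 1 2 = {1, 2} from rfl, sum_pair (by norm_num), add_assoc]
  | succ N hN ih =>
    rw [sum_Icc_succ_top (by omega), sum_Icc_succ_top (by omega)]
    linear_combination ih + one_sub_q_pow_five_mul_term (m := N + 1) (by omega)

theorem prod_range_rogersRamanujanFactor (N : ℕ) :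
    ∏ k ∈ range (N + 1), rogersRamanujanFactor k
      = rogersRamanujanFactor 0 * ∏ k ∈ Icc 1 N, rogersRamanujanFactor k := by
  induction N with
  | zero => simp
  | succ N ih => rw [prod_range_succ, ih, prod_Icc_succ_top (by omega), mul_assoc]

/-- The specialization `t = 1`, `w = q²` of the `(t,w)`-refinement for parts 2
and 3: partitions into parts `≡ 2, 3 mod 5` with no 3's but 5's allowed. -/
theorem stmt19 (hRR : RR2) :
    1 + q ^ 2 * ((1 - q)⁻¹ - q)
        + (q ^ 6 * (1 - q ^ 2)⁻¹) * ((q + q ^ 2 + q ^ 4) * (1 - q ^ 5)⁻¹)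
        + sumTail
      = ((1 - q ^ 2)⁻¹ * (1 - q ^ 5)⁻¹) * prodTail := by
  change initialTerms + sumTail = _
  set rrSum := mk fun N => coeff N (∑ m ∈ Icc 1 N, rogersRamanujanTerm m)
  set rrProd := mk fun N => coeff N (∏ k ∈ range (N + 1), rogersRamanujanFactor k)
  have hsum : (1 - q ^ 5) * (initialTerms + sumTail) = (1 - q ^ 3) * (1 + rrSum) :=
    tendsto_nhds_unique_of_eventuallyEq
      (((tendsto_sum_Icc_of_X_pow_dvd 3 X_pow_dvd_term).const_add _).const_mul _)
      (((tendsto_sum_Icc_of_X_pow_dvd 1 X_pow_dvd_rogersRamanujanTerm).const_add 1).const_mul _)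
      ((eventually_ge_atTop 2).mono fun _ => one_sub_q_pow_five_mul_initialTerms_add_sum_term)
  have hprod : rrProd = rogersRamanujanFactor 0 * prodTail :=
    tendsto_nhds_unique_of_eventuallyEq
      (tendsto_prod_range_of_X_pow_dvd_sub_one X_pow_dvd_rogersRamanujanFactor_sub_one)
      ((tendsto_prod_Icc_of_X_pow_dvd_sub_one 1
        X_pow_dvd_rogersRamanujanFactor_sub_one).const_mul _)
      (.of_forall prod_range_rogersRamanujanFactor)
  rw [show 1 + rrSum = rrProd from hRR, hprod, rogersRamanujanFactor] at hsum
  linear_combination (1 - q ^ 5)⁻¹ * hsum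
    - (initialTerms + sumTail) * one_sub_q_pow_mul_inv (j := 5) (by omega)
    + (1 - q ^ 5)⁻¹ * (1 - q ^ 2)⁻¹ * prodTail * one_sub_q_pow_mul_inv (j := 3) (by omega)

end
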